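/- arXiv:2010.08294 — 2 statements merged into one kernel-verified Lean document; each statement's English description precedes it below -/
import Mathlib

section
/- Let x ∈ W (Hermitian G-representation) and θ ∈ Z(𝔥). Suppose the Kempf–Ness function φ^{θ,x}(g) = ||g.x||² − log|χ^θ(g)|² has a critical point at the identity. Then for every h ∈ H and Y ∈ 𝔥, φ^{θ,x}(h·exp(iY)) − φ^{θ,x}(Id) = Σ_j (exp(2λ_j) − 2λ_j − 1)|p(e_j, x)|² ≥ 0, where (e_j) is an orthonormal basis of eigenvectors of the Hermitian operator iY with eigenvalues λ_j. In particular the identity is a global minimum of φ^{θ,x}, and equality φ^{θ,x}(h·exp(iY)) = φ^{θ,x}(Id) holds if and only if exp(iY).x = x. -/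
/-!
Expanding `x` in the eigenbasis of `iY`, the operator `exp(iY)` scales the `j`-th coordinate by
`e^{λ_j}`, so `‖h·exp(iY).x‖² − ‖x‖² = ∑ (e^{2λ_j} − 1)|⟨e_j, x⟩|²`, while the criticality
condition `μ(x) = θ` says that the character term is `2⟨θ,Y⟩ = ∑ 2λ_j |⟨e_j, x⟩|²`. Each summand
`(e^{2λ} − 2λ − 1)|⟨e_j, x⟩|²` of the difference is nonnegative by `e^t ≥ 1 + t`, and vanishes
exactly when `λ_j = 0` or `⟨e_j, x⟩ = 0`, i.e. when `exp(iY)` fixes the `j`-th coordinate of `x`.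
-/

namespace Real

theorem exp_sub_sub_one_nonneg (t : ℝ) : 0 ≤ exp t - t - 1 := by
  linarith [add_one_le_exp t]

theorem exp_sub_sub_one_eq_zero_iff {t : ℝ} : exp t - t - 1 = 0 ↔ t = 0 := by
  refine ⟨fun h ↦ ?_, fun h ↦ by simp [h]⟩
  by_contra ht
  linarith [add_one_lt_exp ht]

end Real

namespace OrthonormalBasis

open scoped InnerProductSpace

variable {𝕜 ι E : Type*} [RCLike 𝕜] [Fintype ι] [NormedAddCommGroup E] [InnerProductSpace 𝕜 E]
  (b : OrthonormalBasis ι 𝕜 E) {A : E →ₗ[𝕜] E} {μ : ι → 𝕜}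

theorem inner_apply_of_apply_eq_smul (hA : ∀ j, A (b j) = μ j • b j) (x : E) (j : ι) :
    ⟪b j, A x⟫_𝕜 = μ j * ⟪b j, x⟫_𝕜 := by
  classical
  conv_lhs => rw [← b.sum_repr' x]
  simp only [map_sum, map_smul, hA, inner_sum, inner_smul_right,
    orthonormal_iff_ite.mp b.orthonormal, mul_ite, mul_one, mul_zero, Finset.sum_ite_eq,
    Finset.mem_univ, if_true]
  ring

theorem norm_sq_apply_of_apply_eq_smul (hA : ∀ j, A (b j) = μ j • b j) (x : E) :
    ‖A x‖ ^ 2 = ∑ j, ‖μ j‖ ^ 2 * ‖⟪b j, x⟫_𝕜‖ ^ 2 := by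
  simp only [← b.sum_sq_norm_inner_right (A x), b.inner_apply_of_apply_eq_smul hA, norm_mul,
    mul_pow]

theorem apply_eq_self_iff_of_apply_eq_smul (hA : ∀ j, A (b j) = μ j • b j) (x : E) :
    A x = x ↔ ∀ j, μ j = 1 ∨ ⟪b j, x⟫_𝕜 = 0 := by
  simp only [← mul_left_eq_self₀, ← b.inner_apply_of_apply_eq_smul hA]
  refine ⟨fun h j ↦ by rw [h], fun h ↦ b.repr.injective ?_⟩
  ext j
  simpa only [b.repr_apply_apply] using h j

end OrthonormalBasis

/-- Kempf–Ness convexity formula: if the Kempf–Ness function `φ^{θ,x}` is critical at the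
identity, then for any unitary `h` and any `Y ∈ 𝔥` (with `(e_j)` an orthonormal eigenbasis of
the Hermitian operator `iY`, eigenvalues `λ_j`, and `A` the action of `exp(iY)`, and
`2c = log|χ^θ(exp(iY))|² = 2⟨θ,Y⟩`),
`φ^{θ,x}(h·exp(iY)) − φ^{θ,x}(Id) = ‖h(Ax)‖² − 2c − ‖x‖²
  = ∑_j (e^{2λ_j} − 2λ_j − 1)|⟨e_j,x⟩|² ≥ 0`,
with equality iff `exp(iY).x = x`; in particular the identity is a global minimum. -/
theorem stmt_6 {W ι : Type*} [NormedAddCommGroup W] [InnerProductSpace ℂ W]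
    [Fintype ι]
    (e : OrthonormalBasis ι ℂ W) (x : W) (lam : ι → ℝ) (c : ℝ)
    (A : W →ₗ[ℂ] W) (hA : ∀ j, A (e j) = (Real.exp (lam j) : ℂ) • e j)
    (h : W →ₗᵢ[ℂ] W)
    (hcrit : ∑ j, 2 * lam j * ‖(inner ℂ (e j) x : ℂ)‖ ^ 2 = 2 * c) :
    ‖h (A x)‖ ^ 2 - 2 * c - ‖x‖ ^ 2
        = ∑ j, (Real.exp (2 * lam j) - 2 * lam j - 1) * ‖(inner ℂ (e j) x : ℂ)‖ ^ 2
      ∧ 0 ≤ ‖h (A x)‖ ^ 2 - 2 * c - ‖x‖ ^ 2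
      ∧ (‖h (A x)‖ ^ 2 - 2 * c - ‖x‖ ^ 2 = 0 ↔ A x = x) := by
  have hformula : ‖h (A x)‖ ^ 2 - 2 * c - ‖x‖ ^ 2
      = ∑ j, (Real.exp (2 * lam j) - 2 * lam j - 1) * ‖(inner ℂ (e j) x : ℂ)‖ ^ 2 := by
    have hexp : ∀ j, ‖(Real.exp (lam j) : ℂ)‖ ^ 2 = Real.exp (2 * lam j) := fun j ↦ by
      rw [Complex.norm_real, Real.norm_of_nonneg (Real.exp_pos _).le, ← Real.exp_nat_mul]
      norm_num
    rw [h.norm_map, e.norm_sq_apply_of_apply_eq_smul hA, ← hcrit, ← e.sum_sq_norm_inner_right x,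
      ← Finset.sum_sub_distrib, ← Finset.sum_sub_distrib]
    simp only [hexp, sub_mul, one_mul]
  have hterm_nonneg : ∀ j,
      0 ≤ (Real.exp (2 * lam j) - 2 * lam j - 1) * ‖(inner ℂ (e j) x : ℂ)‖ ^ 2 := fun j ↦
    mul_nonneg (Real.exp_sub_sub_one_nonneg _) (sq_nonneg _)
  refine ⟨hformula, hformula ▸ Finset.sum_nonneg fun j _ ↦ hterm_nonneg j, ?_⟩
  rw [hformula, Finset.sum_eq_zero_iff_of_nonneg fun j _ ↦ hterm_nonneg j,
    e.apply_eq_self_iff_of_apply_eq_smul hA]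
  simp [Real.exp_sub_sub_one_eq_zero_iff, -Complex.ofReal_exp, Complex.ofReal_eq_one]
end

section
/- Let χ^θ ∈ X*(G)^ℝ and let x be a θ-stable point with trivial stabilizer in G. Then there exists a unique Y^{θ,x} ∈ 𝔥 such that exp(iY^{θ,x}).x ∈ μ⁻¹(θ). Moreover, for h ∈ H, Y^{θ,h.x} = Ad(h)·Y^{θ,x}; and setting θ' = μ(x) and x' = exp(iY^{θ,x}).x, one has Y^{θ',x'} = −Y^{θ,x}. -/
/-- Uniqueness of the Kempf–Ness displacement: for a θ-stable point `x` with trivial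
stabilizer, there is a unique `Y^{θ,x} ∈ 𝔥` with `exp(iY^{θ,x}).x ∈ μ⁻¹(θ)`; moreover
`Y^{θ,h.x} = Ad(h)·Y^{θ,x}` for `h ∈ H`, and with `θ' = μ(x)`, `x' = exp(iY^{θ,x}).x` one has
`Y^{θ',x'} = −Y^{θ,x}`.  Inputs (from Kempf–Ness theory): `G.x ∩ μ⁻¹(θ)` is a single `H`-orbit
(`hexists`, `hHorbit`), polar decomposition `g = h·exp(iY)` is unique (`hpolar`), `Ad` satisfies
`g·exp(iY)·g⁻¹ = exp(i·Ad(g)Y)`, `exp(−iY) = exp(iY)⁻¹`, `μ` is `H`-invariant on the fiber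
over the central value `θ`, and the stabilizer of `x` is trivial. -/
theorem stmt_12 {G W 𝔥 : Type*} [Group G] [MulAction G W] [AddCommGroup 𝔥] [Module ℝ 𝔥]
    (H : Subgroup G) (expi : 𝔥 → G) (μ : W → 𝔥) (θ : 𝔥) (x : W)
    (Ad : G → 𝔥 ≃ₗ[ℝ] 𝔥)
    (hAd : ∀ (g : G) (Y : 𝔥), g * expi Y * g⁻¹ = expi (Ad g Y))
    (hexpinv : ∀ Y : 𝔥, expi (-Y) = (expi Y)⁻¹)
    (hstab : ∀ g : G, g • x = x → g = 1)
    (hpolar : ∀ g : G, ∃! p : H × 𝔥, g = (p.1 : G) * expi p.2)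
    (hexists : ∃ g : G, μ (g • x) = θ)
    (hHorbit : ∀ g g' : G, μ (g • x) = θ → μ (g' • x) = θ →
      ∃ h ∈ H, g' • x = h • (g • x))
    (hμH : ∀ h ∈ H, ∀ w : W, μ w = θ → μ (h • w) = θ) :
    (∃! Y : 𝔥, μ (expi Y • x) = θ) ∧
      ∀ Y : 𝔥, μ (expi Y • x) = θ →
        ((∀ h ∈ H, μ (expi (Ad h Y) • ((h : G) • x)) = θ) ∧
          μ (expi (-Y) • (expi Y • x)) = μ x) := by
  constructor
  · -- existence and uniqueness
    obtain ⟨g, hg⟩ := hexists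
    obtain ⟨⟨h, Y⟩, hgp, _⟩ := hpolar g
    have hYfib : μ (expi Y • x) = θ := by
      have h1 : μ ((h⁻¹ : G) • (g • x)) = θ := hμH (h⁻¹ : H) h⁻¹.2 _ hg
      have h2 : (h⁻¹ : G) • (g • x) = expi Y • x := by
        rw [smul_smul, hgp]; group
      rwa [h2] at h1
    refine ⟨Y, hYfib, ?_⟩
    intro Y' hY'
    obtain ⟨k, hkH, hk⟩ := hHorbit (expi Y) (expi Y') hYfib hY'
    have hke : expi Y' = k * expi Y := by
      have : ((k * expi Y)⁻¹ * expi Y') • x = x := by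
        rw [mul_smul, hk, ← mul_smul]; simp
      have := hstab _ this
      group at this ⊢
      rw [eq_comm, ← inv_mul_eq_one]
      group
      exact this
    obtain ⟨p, hp, hup⟩ := hpolar (expi Y')
    have e1 : ((⟨k, hkH⟩, Y) : H × 𝔥) = p := hup _ hke
    have e2 : ((1, Y') : H × 𝔥) = p := hup _ (by simp)
    have := e1.trans e2.symm
    exact (congrArg Prod.snd this).symm
  · intro Y hY
    constructor
    · intro h hh
      have : expi ((Ad h) Y) • ((h : G) • x) = (h : G) • (expi Y • x) := by
        rw [smul_smul, smul_smul, ← hAd]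
        group
      rw [this]
      exact hμH h hh _ hY
    · rw [hexpinv, smul_smul]; simp
end
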